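/- arXiv:2406.15581 — 3 statements merged into one kernel-verified Lean document; each statement's English description precedes it below -/
import Mathlib

section
/- Let c > 0, a > 0, μ > 0 be real numbers. If a natural number N satisfies log(N/(e·μ)) ≥ W((1/(e·μ))·log(c/a)), where W is the Lambert W function on [0,∞) (the inverse of y ↦ y·e^y), and if log(c/a) ≥ 0, then c·μ^N / e^{∫_0^N log s ds} ≤ a, i.e., c·(e·μ/N)^N ≤ a. -/
/-! The hypothesis says `W(z) ≤ t` with `z = log(c/a)/(eμ)` and `t = log(N/(eμ))`. Since
`y ↦ y·e^y` is increasing on `[0,∞)`, this gives `z ≤ t·e^t = t·N/(eμ)`, i.e.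
`log(c/a) ≤ N·log(N/(eμ))`, which exponentiates to `c·(eμ/N)^N ≤ a`. The first form of the
conclusion is the same bound, since `∫_0^N log s ds = N log N − N`. -/

open Real

theorem exp_integral_log_natCast (N : ℕ) :
    exp (∫ s in (0 : ℝ)..N, log s) = (N / exp 1) ^ N := by
  rw [integral_log_from_zero, exp_sub, ← exp_one_pow, ← log_pow, div_pow]
  rcases N.eq_zero_or_pos with rfl | hN
  · simp
  · rw [exp_log (by positivity)]

theorem le_mul_exp_of_lambert_le {W : ℝ → ℝ}
    (hW : ∀ z : ℝ, 0 ≤ z → 0 ≤ W z ∧ W z * exp (W z) = z) {z t : ℝ} (hz : 0 ≤ z)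
    (hzt : W z ≤ t) : z ≤ t * exp t := by
  obtain ⟨hw, hwz⟩ := hW z hz
  calc z = W z * exp (W z) := hwz.symm
    _ ≤ t * exp t := mul_le_mul hzt (exp_le_exp.2 hzt) (exp_pos _).le (hw.trans hzt)

/-- At `N = 0` both sides vanish because `log 0 = 0`. -/
theorem mul_exp_log_div_natCast {K : ℝ} (hK : 0 < K) (N : ℕ) :
    K * (log (N / K) * exp (log (N / K))) = N * log (N / K) := by
  rcases N.eq_zero_or_pos with rfl | hN
  · simp
  · rw [exp_log (by positivity)]
    field_simp

theorem mul_div_natCast_pow_le_of_log_le {c a K : ℝ} (hc : 0 < c) (ha : 0 < a) (hK : 0 < K)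
    {N : ℕ} (h : log (c / a) ≤ N * log (N / K)) : c * (K / N) ^ N ≤ a := by
  rcases N.eq_zero_or_pos with rfl | hN
  · simpa [log_nonpos_iff (div_pos hc ha).le, div_le_one ha] using h
  · rw [← log_pow, log_le_log_iff (div_pos hc ha) (by positivity), div_le_iff₀ ha] at h
    calc c * (K / N) ^ N ≤ (N / K) ^ N * a * (K / N) ^ N := by gcongr
      _ = a := by
        rw [mul_right_comm, ← mul_pow, div_mul_div_comm, mul_comm (N : ℝ),
          div_self (by positivity), one_pow, one_mul]

/-- If `W` is the Lambert W function on `[0,∞)` (inverse of `y ↦ y·e^y`), `c, a, μ > 0`,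
`log(c/a) ≥ 0`, and `N` satisfies `log(N/(e·μ)) ≥ W((1/(e·μ))·log(c/a))`, then
`c·μ^N / e^{∫_0^N log s ds} ≤ a`, i.e. `c·(e·μ/N)^N ≤ a`. -/
theorem stmt2 (c a μ : ℝ) (hc : 0 < c) (ha : 0 < a) (hμ : 0 < μ)
    (W : ℝ → ℝ) (hW : ∀ z : ℝ, 0 ≤ z → 0 ≤ W z ∧ W z * Real.exp (W z) = z)
    (hlog : 0 ≤ Real.log (c / a))
    (N : ℕ)
    (hN : W ((1 / (Real.exp 1 * μ)) * Real.log (c / a)) ≤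
      Real.log ((N : ℝ) / (Real.exp 1 * μ))) :
    c * μ ^ N / Real.exp (∫ s in (0:ℝ)..(N : ℝ), Real.log s) ≤ a ∧
    c * (Real.exp 1 * μ / (N : ℝ)) ^ N ≤ a := by
  have hK : 0 < exp 1 * μ := by positivity
  have hz := le_mul_exp_of_lambert_le hW (by positivity) hN
  have hbound : c * (exp 1 * μ / N) ^ N ≤ a := by
    refine mul_div_natCast_pow_le_of_log_le hc ha hK ?_
    rw [← mul_exp_log_div_natCast hK N, ← div_le_iff₀' hK]
    simpa [div_eq_inv_mul] using hz
  refine ⟨?_, hbound⟩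
  convert hbound using 1
  rw [exp_integral_log_natCast, div_pow, div_div_eq_mul_div, div_pow, mul_pow]
  ring
end

section
/- Let U : [−h, h] → ℝ^{n×n} be continuously differentiable on (0,h) and (−h,0), continuous on [−h,h], and satisfy the dynamic property U′(θ) − U′(θ−h)·D = U(θ)·A₀ + U(θ−h)·A₁ for θ ∈ (0,h). Then for every natural k ≥ 1, integration by parts yields: −k·G_{k−1} − (−h)^k·U(0) + k·Ḡ_{k−1}·D + (−h)^k·U(−h)·D = G_k·A₀ + Ḡ_k·A₁, where G_k = ∫_{−h}^0 U(h+θ)·θ^k dθ and Ḡ_k = ∫_{−h}^0 U(θ)·θ^k dθ. -/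
/-!
For `F θ = U (h + θ) - U θ * D`, the dynamic property says precisely that
`F' θ = U (h + θ) * A₀ + U θ * A₁` on `(-h, 0)`. Integrating `θ ^ k • F' θ` over `[-h, 0]` by parts,
the boundary term at `0` vanishes because `k ≥ 1`, the one at `-h` is
`(-h) ^ k • (U 0 - U (-h) * D)`, and the remaining integral is `k • ∫ θ ^ (k - 1) • F θ`.
-/

open Matrix MeasureTheory Set

attribute [local instance] Matrix.normedAddCommGroup Matrix.normedSpace

theorem intervalIntegral.integral_pow_succ_smul_eq_of_hasDerivAt {E : Type*}
    [NormedAddCommGroup E] [NormedSpace ℝ E] [CompleteSpace E] {F F' : ℝ → E} {a b : ℝ}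
    (hF : ContinuousOn F (uIcc a b))
    (hFF' : ∀ x ∈ Ioo (min a b) (max a b), HasDerivAt F (F' x) x)
    (hF' : ContinuousOn F' (uIcc a b)) (m : ℕ) :
    ∫ x in a..b, x ^ (m + 1) • F' x =
      b ^ (m + 1) • F b - a ^ (m + 1) • F a - ((m : ℝ) + 1) • ∫ x in a..b, x ^ m • F x := by
  have hpow (x : ℝ) : HasDerivAt (fun x : ℝ => x ^ (m + 1)) (((m : ℝ) + 1) * x ^ m) x := by
    simpa using hasDerivAt_pow (m + 1) x
  rw [intervalIntegral.integral_smul_deriv_eq_deriv_smul_of_hasDerivAt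
    (continuous_pow _).continuousOn hF (fun x _ => hpow x) hFF'
    ((by fun_prop : Continuous fun x : ℝ => ((m : ℝ) + 1) * x ^ m).intervalIntegrable _ _)
    hF'.intervalIntegrable]
  simp only [mul_smul, intervalIntegral.integral_smul]

namespace Matrix

variable {ι : Type*} [Fintype ι] [DecidableEq ι]

theorem _root_.HasDerivAt.matrix_mul_const {f : ℝ → Matrix ι ι ℝ} {f' : Matrix ι ι ℝ} {x : ℝ}
    (hf : HasDerivAt f f' x) (B : Matrix ι ι ℝ) : HasDerivAt (fun x => f x * B) (f' * B) x :=
  (LinearMap.mulRight ℝ B).toContinuousLinearMap.hasFDerivAt.comp_hasDerivAt x hf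

section IntervalIntegral

variable {f g : ℝ → Matrix ι ι ℝ} {a b : ℝ}

theorem intervalIntegral_mul_const (hf : ContinuousOn f (uIcc a b)) (B : Matrix ι ι ℝ) :
    ∫ x in a..b, f x * B = (∫ x in a..b, f x) * B :=
  (LinearMap.mulRight ℝ B).toContinuousLinearMap.intervalIntegral_comp_comm hf.intervalIntegrable

theorem intervalIntegral_pow_smul_mul_const (j : ℕ) (hf : ContinuousOn f (uIcc a b))
    (B : Matrix ι ι ℝ) :
    ∫ x in a..b, x ^ j • (f x * B) = (∫ x in a..b, x ^ j • f x) * B := by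
  simp_rw [← smul_mul_assoc]
  exact intervalIntegral_mul_const ((continuous_pow j).continuousOn.smul hf) B

theorem intervalIntegral_pow_smul_mul_add_mul (j : ℕ) (hf : ContinuousOn f (uIcc a b))
    (hg : ContinuousOn g (uIcc a b)) (A B : Matrix ι ι ℝ) :
    ∫ x in a..b, x ^ j • (f x * A + g x * B) =
      (∫ x in a..b, x ^ j • f x) * A + (∫ x in a..b, x ^ j • g x) * B := by
  simp_rw [smul_add]
  rw [intervalIntegral.integral_add, intervalIntegral_pow_smul_mul_const j hf,
    intervalIntegral_pow_smul_mul_const j hg]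
  all_goals exact ContinuousOn.intervalIntegrable (by fun_prop)

theorem intervalIntegral_pow_smul_sub_mul (j : ℕ) (hf : ContinuousOn f (uIcc a b))
    (hg : ContinuousOn g (uIcc a b)) (B : Matrix ι ι ℝ) :
    ∫ x in a..b, x ^ j • (f x - g x * B) =
      (∫ x in a..b, x ^ j • f x) - (∫ x in a..b, x ^ j • g x) * B := by
  simp_rw [smul_sub]
  rw [intervalIntegral.integral_sub, intervalIntegral_pow_smul_mul_const j hg]
  all_goals exact ContinuousOn.intervalIntegrable (by fun_prop)

end IntervalIntegral

theorem hasDerivAt_shift_sub_mul_of_dynamic {h θ : ℝ} {A₀ A₁ D : Matrix ι ι ℝ}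
    {U U' : ℝ → Matrix ι ι ℝ}
    (hderiv : ∀ θ ∈ Ioo (0 : ℝ) h ∪ Ioo (-h) 0, HasDerivAt U (U' θ) θ)
    (hdyn : ∀ θ ∈ Ioo (0 : ℝ) h, U' θ - U' (θ - h) * D = U θ * A₀ + U (θ - h) * A₁)
    (hθ : θ ∈ Ioo (-h) 0) :
    HasDerivAt (fun θ => U (h + θ) - U θ * D) (U (h + θ) * A₀ + U θ * A₁) θ := by
  have hθh : h + θ ∈ Ioo 0 h := ⟨by linarith [hθ.1], by linarith [hθ.2]⟩
  have hdynθ : U' (h + θ) - U' θ * D = U (h + θ) * A₀ + U θ * A₁ := by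
    simpa using hdyn (h + θ) hθh
  rw [← hdynθ]
  exact ((hderiv _ (.inl hθh)).comp_const_add h θ).sub
    ((hderiv θ (.inr hθ)).matrix_mul_const D)

end Matrix

/-- Integration by parts in the recursion of Proposition 1: if `U` is continuous on
`[−h,h]`, differentiable on `(0,h)` and `(−h,0)` with derivative `U'`, and satisfies the
dynamic property `U′(θ) − U′(θ−h)·D = U(θ)·A₀ + U(θ−h)·A₁` on `(0,h)`, then for `k ≥ 1`:
`−k·G_{k−1} − (−h)^k·U(0) + k·Ḡ_{k−1}·D + (−h)^k·U(−h)·D = G_k·A₀ + Ḡ_k·A₁`,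
where `G_k = ∫_{−h}^0 θ^k • U(h+θ) dθ` and `Ḡ_k = ∫_{−h}^0 θ^k • U(θ) dθ`. -/
theorem stmt9 (n : ℕ) (h : ℝ) (hh : 0 < h)
    (A₀ A₁ D : Matrix (Fin n) (Fin n) ℝ)
    (U U' : ℝ → Matrix (Fin n) (Fin n) ℝ)
    (hcont : ContinuousOn U (Set.Icc (-h) h))
    (hderiv : ∀ θ ∈ Set.Ioo (0:ℝ) h ∪ Set.Ioo (-h) (0:ℝ), HasDerivAt U (U' θ) θ)
    (hdyn : ∀ θ ∈ Set.Ioo (0:ℝ) h,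
      U' θ - U' (θ - h) * D = U θ * A₀ + U (θ - h) * A₁)
    (k : ℕ) (hk : 1 ≤ k) :
    -((k : ℝ) • (∫ θ in (-h)..0, θ ^ (k - 1) • U (h + θ))) -
        (-h) ^ k • U 0 +
        (k : ℝ) • ((∫ θ in (-h)..0, θ ^ (k - 1) • U θ) * D) +
        (-h) ^ k • (U (-h) * D) =
      (∫ θ in (-h)..0, θ ^ k • U (h + θ)) * A₀ +
        (∫ θ in (-h)..0, θ ^ k • U θ) * A₁ := by
  obtain ⟨m, rfl⟩ := Nat.exists_eq_add_of_le' hk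
  have hI : uIcc (-h) 0 = Icc (-h) 0 := uIcc_of_le (by linarith)
  have hU : ContinuousOn U (uIcc (-h) 0) := hcont.mono (hI ▸ Icc_subset_Icc_right hh.le)
  have hUh : ContinuousOn (fun θ => U (h + θ)) (uIcc (-h) 0) :=
    hcont.comp (by fun_prop) fun θ hθ => by
      rw [hI] at hθ
      exact ⟨by linarith [hθ.1], by linarith [hθ.2]⟩
  have hparts := intervalIntegral.integral_pow_succ_smul_eq_of_hasDerivAt
    (F := fun θ => U (h + θ) - U θ * D) (F' := fun θ => U (h + θ) * A₀ + U θ * A₁)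
    (hUh.sub (hU.mul continuousOn_const))
    (fun θ hθ => hasDerivAt_shift_sub_mul_of_dynamic hderiv hdyn (by simpa [hh.le] using hθ))
    ((hUh.mul continuousOn_const).add (hU.mul continuousOn_const)) m
  rw [intervalIntegral_pow_smul_mul_add_mul _ hUh hU,
    intervalIntegral_pow_smul_sub_mul _ hUh hU] at hparts
  simp only [add_neg_cancel, add_zero, zero_pow (Nat.succ_ne_zero m), zero_smul] at hparts
  push_cast
  linear_combination (norm := module) -hparts
end

section
/- Let f : [−1,1] → ℝ be analytic with |f^{(m+1)}(x)| ≤ V·r^{m+1} for all x and some V, r > 0 (e.g., f(x) = g(−(h/2)(1+x)) for g with ‖g^{(k)}‖_∞ ≤ r₀^k gives V = 1, r = h·r₀/2). Then its Chebyshev coefficients a_k = (2/π)∫_{−1}^1 f(x)T_k(x)/√(1−x²) dx satisfy, for every m ≥ 1 and k ≥ m+1, |a_k| ≤ 2·V·r^{m+1} / (k(k−1)⋯(k−m)). -/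
open Finset

open Real MeasureTheory intervalIntegral Set Polynomial.Chebyshev
open scoped ContDiff

lemma myInt : IntervalIntegrable (fun x : ℝ => 1 / Real.sqrt (1 - x ^ 2)) volume (-1) 1 := by
  apply intervalIntegrable_deriv_of_nonneg (g := Real.arcsin)
  · exact Real.continuous_arcsin.continuousOn
  · intro x hx
    simp only [min_eq_left, max_eq_right, (by norm_num : (-1:ℝ) ≤ 1)] at hx
    exact Real.hasDerivAt_arcsin (ne_of_gt hx.1) (ne_of_lt hx.2)
  · intro x _; positivity

lemma myIntVal : ∫ x in (-1:ℝ)..1, 1 / Real.sqrt (1 - x ^ 2) = π := by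
  rw [integral_eq_sub_of_hasDeriv_right_of_le (by norm_num)
    (Real.continuous_arcsin.continuousOn)
    (fun x hx => (Real.hasDerivAt_arcsin (ne_of_gt hx.1) (ne_of_lt hx.2)).hasDerivWithinAt) myInt]
  simp [Real.arcsin_one, Real.arcsin_neg_one]

lemma myTbound (n : ℤ) {x : ℝ} (hx : x ∈ Set.Icc (-1:ℝ) 1) :
    |(Polynomial.Chebyshev.T ℝ n).eval x| ≤ 1 := by
  have h : x = Real.cos (Real.arccos x) := (Real.cos_arccos hx.1 hx.2).symm
  rw [h, T_real_cos]
  exact Real.abs_cos_le_one _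

lemma myUIocIcc {x : ℝ} (hx : x ∈ Set.uIoc (-1:ℝ) 1) : x ∈ Set.Icc (-1:ℝ) 1 := by
  rcases Set.mem_uIoc.mp hx with h | h
  · exact ⟨le_of_lt h.1, h.2⟩
  · exact ⟨by linarith [h.2], by linarith [h.1]⟩

lemma myPtBound {g : ℝ → ℝ} (n : ℤ) {C : ℝ} (hCnn : 0 ≤ C)
    (hC : ∀ x ∈ Set.Icc (-1:ℝ) 1, |g x| ≤ C) {x : ℝ} (hx : x ∈ Set.Icc (-1:ℝ) 1) :
    |g x * (Polynomial.Chebyshev.T ℝ n).eval x / Real.sqrt (1 - x ^ 2)|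
      ≤ C * (1 / Real.sqrt (1 - x ^ 2)) := by
  rw [abs_div, abs_of_nonneg (Real.sqrt_nonneg _), mul_one_div]
  gcongr
  rw [abs_mul]
  calc |g x| * |(Polynomial.Chebyshev.T ℝ n).eval x| ≤ C * 1 :=
        mul_le_mul (hC x hx) (myTbound n hx) (abs_nonneg _) hCnn
    _ = C := mul_one C

lemma myIntegrable' {g : ℝ → ℝ} (hg : Continuous g) (n : ℤ) {C : ℝ}
    (hC : ∀ x ∈ Set.Icc (-1:ℝ) 1, |g x| ≤ C) :
    IntervalIntegrable (fun x : ℝ => g x * (Polynomial.Chebyshev.T ℝ n).eval x / Real.sqrt (1 - x ^ 2))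
      volume (-1) 1 := by
  have hCnn : 0 ≤ C := le_trans (abs_nonneg _) (hC 0 (by norm_num))
  have hdom : IntervalIntegrable (fun x : ℝ => C * (1 / Real.sqrt (1 - x ^ 2))) volume (-1) 1 :=
    myInt.const_mul C
  rw [intervalIntegrable_iff] at hdom ⊢
  apply hdom.integrable.mono
  · apply (Measurable.aestronglyMeasurable ?_)
    exact (hg.mul (Polynomial.continuous _)).measurable.div
      ((continuous_const.sub (continuous_pow 2)).sqrt.measurable)
  · rw [ae_restrict_iff' measurableSet_uIoc]
    filter_upwards with x hx
    simp only [Real.norm_eq_abs]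
    rw [abs_of_nonneg (by positivity : (0:ℝ) ≤ C * (1 / Real.sqrt (1 - x ^ 2)))]
    exact myPtBound n hCnn hC (myUIocIcc hx)

lemma myIntegrable {g : ℝ → ℝ} (hg : Continuous g) (n : ℤ) :
    IntervalIntegrable (fun x : ℝ => g x * (Polynomial.Chebyshev.T ℝ n).eval x / Real.sqrt (1 - x ^ 2))
      volume (-1) 1 := by
  obtain ⟨C, hC⟩ := (isCompact_Icc (a := (-1:ℝ)) (b := 1)).exists_bound_of_continuousOn
    (hg.continuousOn (s := Set.Icc (-1) 1))
  exact myIntegrable' hg n (by simpa using hC)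

lemma myBound {g : ℝ → ℝ} (hg : Continuous g) (n : ℤ) {C : ℝ}
    (hC : ∀ x ∈ Set.Icc (-1:ℝ) 1, |g x| ≤ C) :
    |∫ x in (-1:ℝ)..1, g x * (Polynomial.Chebyshev.T ℝ n).eval x / Real.sqrt (1 - x ^ 2)|
      ≤ C * π := by
  have hCnn : 0 ≤ C := le_trans (abs_nonneg _) (hC 0 (by norm_num))
  have h := intervalIntegral.norm_integral_le_abs_of_norm_le
    (f := fun x : ℝ => g x * (Polynomial.Chebyshev.T ℝ n).eval x / Real.sqrt (1 - x ^ 2))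
    (g := fun x : ℝ => C * (1 / Real.sqrt (1 - x ^ 2))) (μ := volume) (a := -1) (b := 1)
    ?_ (myInt.const_mul C)
  · rw [Real.norm_eq_abs] at h
    refine h.trans ?_
    rw [intervalIntegral.integral_const_mul, myIntVal, abs_of_nonneg (by positivity)]
  · rw [ae_restrict_iff' measurableSet_uIoc]
    filter_upwards with x hx
    exact myPtBound n hCnn hC (myUIocIcc hx)

-- derivative of sin (k * arccos x)
lemma mySinDeriv (k : ℕ) {x : ℝ} (hx : x ∈ Set.Ioo (-1:ℝ) 1) :
    HasDerivAt (fun y : ℝ => Real.sin ((k:ℝ) * Real.arccos y))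
      (-((k:ℝ) * (Polynomial.Chebyshev.T ℝ (k:ℤ)).eval x / Real.sqrt (1 - x ^ 2))) x := by
  have h1 := (Real.hasDerivAt_arccos (ne_of_gt hx.1) (ne_of_lt hx.2)).const_mul (k:ℝ)
  have h2 := h1.sin
  convert h2 using 1
  have hT : (Polynomial.Chebyshev.T ℝ (k:ℤ)).eval x = Real.cos ((k:ℝ) * Real.arccos x) := by
    conv_lhs => rw [← Real.cos_arccos (le_of_lt hx.1) (le_of_lt hx.2)]
    rw [T_real_cos]
    push_cast
    ring_nf
  rw [hT]
  field_simp

-- sin(k arccos x) in terms of Chebyshev polys, valid on all of Icc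
lemma mySinEq (k : ℕ) (hk : 1 ≤ k) {x : ℝ} (hx : x ∈ Set.Icc (-1:ℝ) 1) (c : ℝ) :
    c * ((1:ℝ)/k * Real.sin ((k:ℝ) * Real.arccos x)) =
      (1/(2*(k:ℝ))) * (c * (Polynomial.Chebyshev.T ℝ ((k:ℤ)-1)).eval x / Real.sqrt (1 - x ^ 2)
        - c * (Polynomial.Chebyshev.T ℝ ((k:ℤ)+1)).eval x / Real.sqrt (1 - x ^ 2)) := by
  rcases eq_or_lt_of_le hx.1 with h1 | h1
  · have : Real.arccos x = π := by rw [← h1, Real.arccos_neg_one]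
    rw [this]
    have : Real.sin ((k:ℝ) * π) = 0 := by
      have := Real.sin_int_mul_pi (k:ℤ); push_cast at this ⊢; linarith [this]
    rw [this]
    have : Real.sqrt (1 - x ^ 2) = 0 := by rw [← h1]; norm_num
    rw [this]
    simp
  rcases eq_or_lt_of_le hx.2 with h2 | h2
  · have ha : Real.arccos x = 0 := by rw [h2, Real.arccos_one]
    have hs : Real.sqrt (1 - x ^ 2) = 0 := by rw [h2]; norm_num
    rw [ha, hs]
    simp
  · -- interior case
    set θ := Real.arccos x with hθ
    have hcos : Real.cos θ = x := Real.cos_arccos hx.1 hx.2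
    have hsin : Real.sin θ = Real.sqrt (1 - x ^ 2) := by
      rw [hθ, Real.sin_arccos]
    have hsinpos : 0 < Real.sin θ := by
      rw [hsin]; apply Real.sqrt_pos.mpr; nlinarith [hx.1, h2, h1]
    have hT1 : (Polynomial.Chebyshev.T ℝ ((k:ℤ)-1)).eval x = Real.cos (((k:ℝ)-1) * θ) := by
      conv_lhs => rw [← hcos]
      rw [T_real_cos]; push_cast; ring_nf
    have hT2 : (Polynomial.Chebyshev.T ℝ ((k:ℤ)+1)).eval x = Real.cos (((k:ℝ)+1) * θ) := by
      conv_lhs => rw [← hcos]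
      rw [T_real_cos]; push_cast; ring_nf
    have key : Real.cos (((k:ℝ)-1) * θ) - Real.cos (((k:ℝ)+1) * θ)
        = 2 * Real.sin ((k:ℝ) * θ) * Real.sin θ := by
      rw [Real.cos_sub_cos]
      have e1 : (((k:ℝ)-1) * θ + ((k:ℝ)+1) * θ) / 2 = (k:ℝ) * θ := by ring
      have e2 : (((k:ℝ)-1) * θ - ((k:ℝ)+1) * θ) / 2 = -θ := by ring
      rw [e1, e2, Real.sin_neg]; ring
    rw [hT1, hT2, ← hsin]
    have hkne : (k:ℝ) ≠ 0 := Nat.cast_ne_zero.mpr (by omega)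
    have hsne : Real.sin θ ≠ 0 := ne_of_gt hsinpos
    field_simp
    have key' := key
    rw [mul_comm ((k:ℝ)-1) θ, mul_comm ((k:ℝ)+1) θ] at key'
    linear_combination (-c) * key'


lemma myIBP {g : ℝ → ℝ} (hg : ContDiff ℝ (∞ : WithTop ℕ∞) g) (k : ℕ) (hk : 1 ≤ k) :
    ∫ x in (-1:ℝ)..1, g x * (Polynomial.Chebyshev.T ℝ (k:ℤ)).eval x / Real.sqrt (1 - x ^ 2)
    = (1/(2*(k:ℝ))) *
      ((∫ x in (-1:ℝ)..1, deriv g x * (Polynomial.Chebyshev.T ℝ ((k:ℤ)-1)).eval x / Real.sqrt (1 - x ^ 2))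
        - ∫ x in (-1:ℝ)..1, deriv g x * (Polynomial.Chebyshev.T ℝ ((k:ℤ)+1)).eval x / Real.sqrt (1 - x ^ 2)) := by
  have hkne : (k:ℝ) ≠ 0 := Nat.cast_ne_zero.mpr (by omega)
  have hgc : Continuous g := hg.continuous
  have hGc : Continuous (deriv g) := hg.continuous_deriv (by exact_mod_cast le_top)
  have hdg : ∀ x, HasDerivAt g (deriv g x) x := fun x =>
    ((hg.differentiable (by simp)) x).hasDerivAt
  set v : ℝ → ℝ := fun x => (1:ℝ)/k * Real.sin ((k:ℝ) * Real.arccos x) with hv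
  have hvc : Continuous v :=
    continuous_const.mul (Real.continuous_sin.comp (continuous_const.mul Real.continuous_arccos))
  set F : ℝ → ℝ := fun x => g x * v x with hF
  set F' : ℝ → ℝ := fun x => deriv g x * v x
    - g x * (Polynomial.Chebyshev.T ℝ (k:ℤ)).eval x / Real.sqrt (1 - x ^ 2) with hF'
  have hFderiv : ∀ x ∈ Set.Ioo (-1:ℝ) 1, HasDerivAt F (F' x) x := by
    intro x hx
    have h1 : HasDerivAt v ((1:ℝ)/k * -((k:ℝ) * (Polynomial.Chebyshev.T ℝ (k:ℤ)).eval x / Real.sqrt (1 - x ^ 2))) x :=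
      (mySinDeriv k hx).const_mul ((1:ℝ)/k)
    have h2 := (hdg x).mul h1
    convert h2 using 1
    any_goals rfl
    have hsimp : (1:ℝ)/k * -((k:ℝ) * (Polynomial.Chebyshev.T ℝ (k:ℤ)).eval x / Real.sqrt (1 - x ^ 2))
        = -((Polynomial.Chebyshev.T ℝ (k:ℤ)).eval x / Real.sqrt (1 - x ^ 2)) := by
      rw [mul_neg, neg_inj, div_mul_div_comm, one_mul, mul_div_mul_left _ _ hkne]
    rw [hsimp]
    ring
  have hintA : IntervalIntegrable (fun x => deriv g x * v x) volume (-1) 1 :=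
    (hGc.mul hvc).intervalIntegrable _ _
  have hintB : IntervalIntegrable
      (fun x => g x * (Polynomial.Chebyshev.T ℝ (k:ℤ)).eval x / Real.sqrt (1 - x ^ 2)) volume (-1) 1 :=
    myIntegrable hgc _
  have hintF' : IntervalIntegrable F' volume (-1) 1 := by
    have := hintA.sub hintB
    convert this using 1
  have hzero : (∫ x in (-1:ℝ)..1, F' x) = 0 := by
    rw [integral_eq_sub_of_hasDeriv_right_of_le (by norm_num)
      ((hgc.mul hvc).continuousOn)
      (fun x hx => (hFderiv x hx).hasDerivWithinAt) hintF']
    have hs1 : v 1 = 0 := by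
      simp [hv, Real.arccos_one]
    have hs2 : v (-1) = 0 := by
      simp [hv, Real.arccos_neg_one, Real.sin_nat_mul_pi]
    simp [hs1, hs2]
  have hsplit : (∫ x in (-1:ℝ)..1, F' x)
      = (∫ x in (-1:ℝ)..1, deriv g x * v x) - ∫ x in (-1:ℝ)..1,
        g x * (Polynomial.Chebyshev.T ℝ (k:ℤ)).eval x / Real.sqrt (1 - x ^ 2) := by
    rw [← intervalIntegral.integral_sub hintA hintB]
  have hmain : (∫ x in (-1:ℝ)..1, g x * (Polynomial.Chebyshev.T ℝ (k:ℤ)).eval x / Real.sqrt (1 - x ^ 2))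
      = ∫ x in (-1:ℝ)..1, deriv g x * v x := by
    rw [hsplit] at hzero; linarith [hzero]
  rw [hmain]
  have hcongr : (∫ x in (-1:ℝ)..1, deriv g x * v x)
      = ∫ x in (-1:ℝ)..1, (1/(2*(k:ℝ))) *
        (deriv g x * (Polynomial.Chebyshev.T ℝ ((k:ℤ)-1)).eval x / Real.sqrt (1 - x ^ 2)
          - deriv g x * (Polynomial.Chebyshev.T ℝ ((k:ℤ)+1)).eval x / Real.sqrt (1 - x ^ 2)) := by
    apply intervalIntegral.integral_congr
    intro x hx
    rw [Set.uIcc_of_le (by norm_num : (-1:ℝ) ≤ 1)] at hx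
    exact mySinEq k hk hx (deriv g x)
  rw [hcongr, intervalIntegral.integral_const_mul,
    intervalIntegral.integral_sub (myIntegrable hGc _) (myIntegrable hGc _)]

lemma myKey : ∀ (m : ℕ) (g : ℝ → ℝ), ContDiff ℝ (∞ : WithTop ℕ∞) g → ∀ C : ℝ, 0 ≤ C →
    (∀ x ∈ Set.Icc (-1:ℝ) 1, |iteratedDeriv m g x| ≤ C) →
    ∀ k : ℕ, m ≤ k →
    |(2/π) * ∫ x in (-1:ℝ)..1, g x * (Polynomial.Chebyshev.T ℝ (k:ℤ)).eval x / Real.sqrt (1 - x ^ 2)|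
      ≤ 2*C / ∏ i ∈ Finset.range m, ((k:ℝ) - (i:ℝ)) := by
  intro m
  induction m with
  | zero =>
    intro g hg C hC hb k _
    simp only [Finset.range_zero, Finset.prod_empty, div_one]
    have hb' : ∀ x ∈ Set.Icc (-1:ℝ) 1, |g x| ≤ C := by
      intro x hx; have := hb x hx; rwa [iteratedDeriv_zero] at this
    rw [abs_mul, abs_of_nonneg (by positivity : (0:ℝ) ≤ 2/π)]
    calc 2/π * |∫ x in (-1:ℝ)..1, g x * (Polynomial.Chebyshev.T ℝ (k:ℤ)).eval x / Real.sqrt (1 - x ^ 2)|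
        ≤ 2/π * (C * π) :=
          mul_le_mul_of_nonneg_left (myBound hg.continuous _ hb') (by positivity)
      _ = 2*C := by
          field_simp
  | succ m ih =>
    intro g hg C hC hb k hk
    have hk1 : 1 ≤ k := by omega
    have hG : ContDiff ℝ (∞ : WithTop ℕ∞) (deriv g) := (contDiff_infty_iff_deriv.mp hg).2
    have hbG : ∀ x ∈ Set.Icc (-1:ℝ) 1, |iteratedDeriv m (deriv g) x| ≤ C := by
      intro x hx; have := hb x hx; rwa [iteratedDeriv_succ'] at this
    have h1 := ih (deriv g) hG C hC hbG (k-1) (by omega)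
    have h2 := ih (deriv g) hG C hC hbG (k+1) (by omega)
    push_cast [Nat.cast_sub hk1] at h1 h2
    set A1 := (2/π) * ∫ x in (-1:ℝ)..1,
      deriv g x * (Polynomial.Chebyshev.T ℝ ((k:ℤ)-1)).eval x / Real.sqrt (1 - x ^ 2) with hA1
    set A2 := (2/π) * ∫ x in (-1:ℝ)..1,
      deriv g x * (Polynomial.Chebyshev.T ℝ ((k:ℤ)+1)).eval x / Real.sqrt (1 - x ^ 2) with hA2
    set P1 := ∏ i ∈ Finset.range m, ((k:ℝ) - 1 - (i:ℝ)) with hP1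
    set P2 := ∏ i ∈ Finset.range m, ((k:ℝ) + 1 - (i:ℝ)) with hP2
    have hkm : (m:ℝ) + 1 ≤ (k:ℝ) := by exact_mod_cast hk
    have hfac : ∀ i ∈ Finset.range m, (0:ℝ) < (k:ℝ) - 1 - (i:ℝ) := by
      intro i hi
      have hi' : (i:ℝ) ≤ (m:ℝ) - 1 := by
        have h : (i:ℕ) + 1 ≤ m := Finset.mem_range.mp hi
        have h' := (Nat.cast_le (α := ℝ)).mpr h
        push_cast at h'; linarith
      linarith
    have hP1pos : 0 < P1 := Finset.prod_pos hfac
    have hP12 : P1 ≤ P2 := by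
      apply Finset.prod_le_prod
      · intro i hi; exact (hfac i hi).le
      · intro i hi; linarith
    have hb2 : |A2| ≤ 2*C/P1 :=
      le_trans h2 (div_le_div_of_nonneg_left (by linarith) hP1pos hP12)
    have hb1 : |A1| ≤ 2*C/P1 := h1
    have hkpos : (0:ℝ) < (k:ℝ) := by exact_mod_cast hk1
    have hIBP := myIBP hg k hk1
    rw [hIBP]
    have heq : (2/π) * ((1/(2*(k:ℝ))) *
        ((∫ x in (-1:ℝ)..1, deriv g x * (Polynomial.Chebyshev.T ℝ ((k:ℤ)-1)).eval x / Real.sqrt (1 - x ^ 2))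
          - ∫ x in (-1:ℝ)..1, deriv g x * (Polynomial.Chebyshev.T ℝ ((k:ℤ)+1)).eval x / Real.sqrt (1 - x ^ 2)))
        = (1/(2*(k:ℝ))) * (A1 - A2) := by
      rw [hA1, hA2]; ring
    rw [heq, abs_mul, abs_of_nonneg (by positivity : (0:ℝ) ≤ 1/(2*(k:ℝ)))]
    have hprod : ∏ i ∈ Finset.range (m+1), ((k:ℝ) - (i:ℝ)) = (k:ℝ) * P1 := by
      rw [Finset.prod_range_succ']
      rw [hP1]
      have : ∀ i ∈ Finset.range m, ((k:ℝ) - ((i+1 : ℕ):ℝ)) = (k:ℝ) - 1 - (i:ℝ) := by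
        intro i _; push_cast; ring
      rw [Finset.prod_congr rfl this]
      push_cast
      ring
    calc (1/(2*(k:ℝ))) * |A1 - A2|
        ≤ (1/(2*(k:ℝ))) * (2*C/P1 + 2*C/P1) :=
          mul_le_mul_of_nonneg_left
            (le_trans (abs_sub A1 A2) (add_le_add hb1 hb2)) (by positivity)
      _ = 2*C/((k:ℝ) * P1) := by
          field_simp
          ring
      _ = 2*C / ∏ i ∈ Finset.range (m+1), ((k:ℝ) - (i:ℝ)) := by rw [hprod]

/-- Shifted version of Trefethen's Theorem 4.2: if `f` is smooth on `[−1,1]` with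
`|f^{(m+1)}(x)| ≤ V·r^{m+1}` for all `m` and `x ∈ [−1,1]`, then its Chebyshev
coefficients `a_k = (2/π)∫_{−1}^1 f(x)T_k(x)/√(1−x²) dx` satisfy, for `m ≥ 1` and
`k ≥ m+1`, `|a_k| ≤ 2·V·r^{m+1}/(k(k−1)⋯(k−m))`. -/
theorem stmt15 (f : ℝ → ℝ) (V r : ℝ) (hV : 0 < V) (hr : 0 < r)
    (hf : ContDiff ℝ (⊤ : ℕ∞) f)
    (hderiv : ∀ m : ℕ, ∀ x ∈ Set.Icc (-1 : ℝ) 1,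
      |iteratedDeriv (m + 1) f x| ≤ V * r ^ (m + 1))
    (a : ℕ → ℝ)
    (ha : ∀ k : ℕ, a k = (2 / Real.pi) *
      ∫ x in (-1 : ℝ)..1,
        f x * (Polynomial.Chebyshev.T ℝ (k : ℤ)).eval x / Real.sqrt (1 - x ^ 2)) :
    ∀ m : ℕ, 1 ≤ m → ∀ k : ℕ, m + 1 ≤ k →
      |a k| ≤ 2 * V * r ^ (m + 1) / ∏ i ∈ Finset.range (m + 1), ((k : ℝ) - (i : ℝ)) := by
  intro m _ k hk
  rw [ha k]
  have h := myKey (m+1) f (hf.of_le (mod_cast le_top)) (V * r ^ (m+1)) (by positivity) (hderiv m) k hk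
  calc |(2/π) * ∫ x in (-1:ℝ)..1,
        f x * (Polynomial.Chebyshev.T ℝ (k:ℤ)).eval x / Real.sqrt (1 - x ^ 2)|
      ≤ 2*(V * r ^ (m+1)) / ∏ i ∈ Finset.range (m+1), ((k:ℝ) - (i:ℝ)) := h
    _ = 2 * V * r ^ (m+1) / ∏ i ∈ Finset.range (m+1), ((k:ℝ) - (i:ℝ)) := by ring
end
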